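/- Let (Ω, 𝒜, P) be a measurable space equipped with a probability measure P, and let X be a compact metric space. Let ω ↦ μ_ω and ω ↦ μ'_ω be two measurable families of Borel probability measures on X, and let ν be the mixture measure defined by ν(A) = ∫_Ω μ'_ω(A) dP(ω) for every Borel set A ⊆ X. Let C be a set of real-valued functions on X that contains the zero function and is closed under multiplication by positive scalars, and define W_C(μ, ν) := sup { ∫_X f dμ − ∫_X f dν : f ∈ C, f is 1-Lipschitz }. Let d ∈ C be Lipschitz with constant K > 0, and assume ω ↦ ∫_X d dμ_ω and ω ↦ ∫_X d dμ'_ω are integrable with respect to P, and that ω ↦ W_C(μ_ω, ν) is integrable with respect to P. Then ∫_Ω ( ∫_X d dμ_ω − ∫_X d dμ'_ω ) dP(ω) ≤ K · ∫_Ω W_C(μ_ω, ν) dP(ω). -/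

import Mathlib

/-!
The mixture `ν` is the Giry bind `P.bind μ'`, so integrating against it is integrating first
against `μ' ω` and then against `P`; hence the left side equals `∫ ω, (∫ d ∂μ ω - ∫ d ∂ν) ∂P`.
Pointwise in `ω`, the rescaled discriminator `K⁻¹ • d` is a 1-Lipschitz member of `C`, so it
competes in the supremum defining `WC C (μ ω) ν`, which is finite because a 1-Lipschitz function
oscillates by at most `diam X`. Integrating the pointwise bound over `P` finishes the proof.
-/

open MeasureTheory NNReal ProbabilityTheory

/-- The class-restricted dual (IPM) form of the 1-Wasserstein distance:
`W_C(μ, ν) = sup { ∫ f dμ − ∫ f dν : f ∈ C, f is 1-Lipschitz }`. -/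
noncomputable def WC {X : Type*} [MeasurableSpace X] [MetricSpace X]
    (C : Set (X → ℝ)) (μ ν : Measure X) : ℝ :=
  sSup {r : ℝ | ∃ f ∈ C, LipschitzWith 1 f ∧ r = ∫ x, f x ∂μ - ∫ x, f x ∂ν}

namespace MeasureTheory.Measure

variable {α β E : Type*} [MeasurableSpace α] [MeasurableSpace β]
  [NormedAddCommGroup E] [NormedSpace ℝ E] {m : Measure α} {μ : α → Measure β}

lemma eq_bind_of_apply_eq_lintegral (hμ : Measurable μ) {ν : Measure β}
    (hν : ∀ s, MeasurableSet s → ν s = ∫⁻ a, μ a s ∂m) : ν = m.bind μ := by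
  ext s hs
  rw [bind_apply hs hμ.aemeasurable, hν s hs]

lemma integral_bind (hμ : Measurable μ) {f : β → E} (hf : Integrable f (m.bind μ)) :
    ∫ x, f x ∂(m.bind μ) = ∫ a, ∫ x, f x ∂μ a ∂m := by
  let κ : Kernel α β := ⟨μ, hμ⟩
  change Integrable f (κ ∘ₘ m) at hf
  change ∫ x, f x ∂(κ ∘ₘ m) = _
  rw [comp_eq_comp_const_apply] at hf ⊢
  exact Kernel.integral_comp hf

lemma integrable_integral_bind (hμ : Measurable μ) {f : β → E} (hf : Integrable f (m.bind μ)) :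
    Integrable (fun a => ∫ x, f x ∂μ a) m := by
  let κ : Kernel α β := ⟨μ, hμ⟩
  change Integrable f (κ ∘ₘ m) at hf
  rw [comp_eq_comp_const_apply] at hf
  exact hf.integral_comp

end MeasureTheory.Measure

section CompactMetric

variable {X : Type*} [MetricSpace X] [CompactSpace X] [MeasurableSpace X] [BorelSpace X]

lemma Continuous.integrable_of_compactSpace {f : X → ℝ} (hf : Continuous f) (μ : Measure X)
    [IsFiniteMeasure μ] : Integrable f μ :=
  hf.integrable_of_hasCompactSupport (.of_compactSpace f)

lemma LipschitzWith.integral_sub_integral_le {K : ℝ≥0} {f : X → ℝ} (hf : LipschitzWith K f)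
    (μ ν : Measure X) [IsProbabilityMeasure μ] [IsProbabilityMeasure ν] :
    ∫ x, f x ∂μ - ∫ y, f y ∂ν ≤ K * Metric.diam (Set.univ : Set X) := by
  set D := (K : ℝ) * Metric.diam (Set.univ : Set X)
  have hfD : ∀ x y, f x ≤ f y + D := fun x y => by
    have hosc := (le_abs_self _).trans ((Real.dist_eq (f x) (f y)) ▸ hf.dist_le_mul x y)
    have hdiam := mul_le_mul_of_nonneg_left
      (Metric.dist_le_diam_of_mem isCompact_univ.isBounded (Set.mem_univ x) (Set.mem_univ y))
      K.coe_nonneg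
    linarith
  have hint := hf.continuous.integrable_of_compactSpace
  have hμ_le : ∀ y, ∫ x, f x ∂μ ≤ f y + D := fun y => by
    simpa using integral_mono (hint μ) (integrable_const (f y + D)) (hfD · y)
  have hν_ge : ∫ x, f x ∂μ - D ≤ ∫ y, f y ∂ν := by
    simpa using integral_mono (integrable_const (∫ x, f x ∂μ - D)) (hint ν)
      fun y => by linarith [hμ_le y]
  linarith

lemma bddAbove_integral_sub_integral (C : Set (X → ℝ)) (μ ν : Measure X)
    [IsProbabilityMeasure μ] [IsProbabilityMeasure ν] :
    BddAbove {r : ℝ | ∃ f ∈ C, LipschitzWith 1 f ∧ r = ∫ x, f x ∂μ - ∫ x, f x ∂ν} := by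
  refine ⟨Metric.diam (Set.univ : Set X), ?_⟩
  rintro r ⟨f, -, hf, rfl⟩
  simpa using hf.integral_sub_integral_le μ ν

lemma integral_sub_integral_le_mul_WC {C : Set (X → ℝ)}
    (hC : ∀ f ∈ C, ∀ c : ℝ, 0 < c → c • f ∈ C) {d : X → ℝ} (hd : d ∈ C) {K : ℝ≥0} (hK : 0 < K)
    (hLip : LipschitzWith K d) (μ ν : Measure X) [IsProbabilityMeasure μ]
    [IsProbabilityMeasure ν] :
    ∫ x, d x ∂μ - ∫ x, d x ∂ν ≤ K * WC C μ ν := by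
  have hK' : (0 : ℝ) < K := hK
  have hLip1 : LipschitzWith 1 ((K : ℝ)⁻¹ • d) := by
    have := (lipschitzWith_smul (K : ℝ)⁻¹).comp hLip
    rwa [nnnorm_inv, NNReal.nnnorm_eq, inv_mul_cancel₀ hK.ne'] at this
  have hle := le_csSup (bddAbove_integral_sub_integral C μ ν)
    ⟨_, hC d hd _ (inv_pos.2 hK'), hLip1, rfl⟩
  simp only [Pi.smul_apply, smul_eq_mul, integral_const_mul, ← mul_sub] at hle
  calc ∫ x, d x ∂μ - ∫ x, d x ∂ν = K * ((K : ℝ)⁻¹ * (∫ x, d x ∂μ - ∫ x, d x ∂ν)) := by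
        field_simp
    _ ≤ K * WC C μ ν := mul_le_mul_of_nonneg_left hle K.coe_nonneg

end CompactMetric

theorem shared_discriminator_bound_general
    {Ω X : Type*} [MeasurableSpace Ω] [MetricSpace X] [CompactSpace X]
    [MeasurableSpace X] [BorelSpace X]
    (P : Measure Ω) [IsProbabilityMeasure P]
    (μ μ' : Ω → Measure X)
    (hμprob : ∀ ω, IsProbabilityMeasure (μ ω))
    (hμ'meas : ∀ s : Set X, MeasurableSet s → Measurable fun ω => μ' ω s)
    (ν : Measure X) [IsProbabilityMeasure ν]
    (hν : ∀ A : Set X, MeasurableSet A → ν A = ∫⁻ ω, μ' ω A ∂P)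
    (C : Set (X → ℝ))
    (hC : ∀ f ∈ C, ∀ c : ℝ, 0 < c → c • f ∈ C)
    (d : X → ℝ) (hd : d ∈ C) (K : ℝ≥0) (hK : 0 < K) (hLip : LipschitzWith K d)
    (hint1 : Integrable (fun ω => ∫ x, d x ∂(μ ω)) P)
    (hint3 : Integrable (fun ω => WC C (μ ω) ν) P) :
    ∫ ω, (∫ x, d x ∂(μ ω) - ∫ x, d x ∂(μ' ω)) ∂P
      ≤ (K : ℝ) * ∫ ω, WC C (μ ω) ν ∂P := by
  have hμ' : Measurable μ' := Measure.measurable_of_measurable_coe μ' hμ'meas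
  have hν_bind := Measure.eq_bind_of_apply_eq_lintegral hμ' hν
  have hdν : Integrable d (P.bind μ') := hν_bind ▸ hLip.continuous.integrable_of_compactSpace ν
  have hmix : ∫ ω, ∫ x, d x ∂(μ' ω) ∂P = ∫ x, d x ∂ν := by
    rw [hν_bind, Measure.integral_bind hμ' hdν]
  have hpointwise (ω : Ω) : ∫ x, d x ∂(μ ω) - ∫ x, d x ∂ν ≤ K * WC C (μ ω) ν :=
    haveI := hμprob ω
    integral_sub_integral_le_mul_WC hC hd hK hLip (μ ω) ν
  calc ∫ ω, (∫ x, d x ∂(μ ω) - ∫ x, d x ∂(μ' ω)) ∂P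
      = ∫ ω, (∫ x, d x ∂(μ ω) - ∫ x, d x ∂ν) ∂P := by
        rw [integral_sub hint1 (Measure.integrable_integral_bind hμ' hdν), hmix,
          integral_sub hint1 (integrable_const _), integral_const, probReal_univ, one_smul]
    _ ≤ ∫ ω, K * WC C (μ ω) ν ∂P :=
        integral_mono (hint1.sub (integrable_const _)) (hint3.const_mul _) hpointwise
    _ = K * ∫ ω, WC C (μ ω) ν ∂P := integral_const_mul _ _

/-- Proposition 2 (shared discriminator), core inequality: for a shared discriminator
`d ∈ C` with Lipschitz constant `K > 0`, the averaged adversarial loss is bounded by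
`K` times the expected class-restricted Wasserstein distance to the mixture measure `ν`. -/
theorem shared_discriminator_bound
    {Ω X : Type*} [MeasurableSpace Ω] [MetricSpace X] [CompactSpace X]
    [MeasurableSpace X] [BorelSpace X]
    (P : Measure Ω) [IsProbabilityMeasure P]
    (μ μ' : Ω → Measure X)
    (hμprob : ∀ ω, IsProbabilityMeasure (μ ω))
    (hμ'prob : ∀ ω, IsProbabilityMeasure (μ' ω))
    (hμmeas : ∀ s : Set X, MeasurableSet s → Measurable fun ω => μ ω s)
    (hμ'meas : ∀ s : Set X, MeasurableSet s → Measurable fun ω => μ' ω s)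
    (ν : Measure X) [IsProbabilityMeasure ν]
    (hν : ∀ A : Set X, MeasurableSet A → ν A = ∫⁻ ω, μ' ω A ∂P)
    (C : Set (X → ℝ)) (h0 : (0 : X → ℝ) ∈ C)
    (hC : ∀ f ∈ C, ∀ c : ℝ, 0 < c → c • f ∈ C)
    (d : X → ℝ) (hd : d ∈ C) (K : ℝ≥0) (hK : 0 < K) (hLip : LipschitzWith K d)
    (hint1 : Integrable (fun ω => ∫ x, d x ∂(μ ω)) P)
    (hint2 : Integrable (fun ω => ∫ x, d x ∂(μ' ω)) P)
    (hint3 : Integrable (fun ω => WC C (μ ω) ν) P) :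
    ∫ ω, (∫ x, d x ∂(μ ω) - ∫ x, d x ∂(μ' ω)) ∂P
      ≤ (K : ℝ) * ∫ ω, WC C (μ ω) ν ∂P :=
  shared_discriminator_bound_general P μ μ' hμprob hμ'meas ν hν C hC d hd K hK hLip hint1 hint3
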